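/- Let d ≥ 3 and σ^{PT}(λ) = λ I − (λ+1)|Φ₀⟩⟨Φ₀| on ℂ^d ⊗ ℂ^d with λ ≥ 0, where |Φ₀⟩ = (1/√d)Σ_i |ii⟩. If λ ≥ 2/(d−2), then for every vector |v⟩ of Schmidt rank at most two, ⟨v|σ^{PT}(λ)|v⟩ ≥ 0. -/

import Mathlib

open scoped BigOperators
open Matrix

/-- The maximally entangled state `|Φ₀⟩ = (1/√d) Σ_i |ii⟩`. -/
noncomputable def Phi0 (d : ℕ) : Fin d × Fin d → ℂ :=
  fun p => if p.1 = p.2 then (1 / Real.sqrt d : ℂ) else 0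

/-- `σ^{PT}(λ) = λ I − (λ+1)|Φ₀⟩⟨Φ₀|`. -/
noncomputable def sigmaPT (d : ℕ) (lam : ℝ) :
    Matrix (Fin d × Fin d) (Fin d × Fin d) ℂ :=
  Matrix.of fun x y => (lam : ℂ) * (if x = y then 1 else 0)
    - ((lam : ℂ) + 1) * (Phi0 d x * star (Phi0 d y))

/-!
The form is `⟨v|σ^{PT}(λ)|v⟩ = λ ‖v‖² - (λ + 1) |⟨Φ₀|v⟩|²`. For
`v = √μ₁ e₁ ⊗ e₂ + √μ₂ e₃ ⊗ e₄` the overlap is `⟨Φ₀|v⟩ = (√μ₁ ⟨ē₁, e₂⟩ + √μ₂ ⟨ē₃, e₄⟩) / √d`,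
and Cauchy–Schwarz bounds each bracket by one, so `|⟨Φ₀|v⟩|² ≤ (√μ₁ + √μ₂)² / d ≤ 2 / d`.
The cross terms of `‖v‖²` carry the factor `⟨e₁, e₃⟩ = 0`, so `‖v‖ = 1`,
and `λ - 2 (λ + 1) / d ≥ 0` is exactly `λ (d - 2) ≥ 2`.
-/

section ProdVec

variable {m n R : Type*}

def prodVec [Mul R] (x : m → R) (y : n → R) : m × n → R := fun p => x p.1 * y p.2

theorem dotProduct_prodVec [Fintype m] [Fintype n] [CommSemiring R] (x x' : m → R)
    (y y' : n → R) :
    prodVec x y ⬝ᵥ prodVec x' y' = (x ⬝ᵥ x') * (y ⬝ᵥ y') := by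
  simp only [dotProduct, prodVec, Fintype.sum_prod_type, Finset.sum_mul_sum]
  exact Finset.sum_congr rfl fun _ _ => Finset.sum_congr rfl fun _ _ => by ring

theorem star_prodVec [CommSemiring R] [StarRing R] (x : m → R) (y : n → R) :
    star (prodVec x y) = prodVec (star x) (star y) :=
  funext fun _ => star_mul' _ _

theorem sum_prodVec_diag [Fintype n] [Mul R] [AddCommMonoid R] (x y : n → R) :
    ∑ i, prodVec x y (i, i) = x ⬝ᵥ y :=
  rfl

end ProdVec

section UnitVectors

variable {n : Type*} [Fintype n]

theorem star_dotProduct_self_eq_one {x : n → ℂ} (hx : ∑ i, ‖x i‖ ^ 2 = 1) :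
    star x ⬝ᵥ x = 1 := by
  simp only [dotProduct, Pi.star_apply, Complex.star_def, Complex.conj_mul']
  exact_mod_cast hx

theorem norm_dotProduct_le_one {x y : n → ℂ} (hx : ∑ i, ‖x i‖ ^ 2 = 1)
    (hy : ∑ i, ‖y i‖ ^ 2 = 1) : ‖x ⬝ᵥ y‖ ≤ 1 := by
  have h := norm_inner_le_norm (𝕜 := ℂ) (WithLp.toLp 2 (star x)) (WithLp.toLp 2 y)
  rw [EuclideanSpace.inner_toLp_toLp, star_star, dotProduct_comm,
    EuclideanSpace.norm_eq, EuclideanSpace.norm_eq] at h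
  simpa [hx, hy] using h

end UnitVectors

theorem star_dotProduct_self_schmidtRankTwo {n : Type*} [Fintype n] {μ₁ μ₂ : ℝ} (hμ₁ : 0 ≤ μ₁)
    (hμ₂ : 0 ≤ μ₂) (hμ : μ₁ + μ₂ = 1) {e₁ e₂ e₃ e₄ : n → ℂ}
    (he₁ : ∑ i, ‖e₁ i‖ ^ 2 = 1) (he₂ : ∑ i, ‖e₂ i‖ ^ 2 = 1)
    (he₃ : ∑ i, ‖e₃ i‖ ^ 2 = 1) (he₄ : ∑ i, ‖e₄ i‖ ^ 2 = 1)
    (h13 : star e₁ ⬝ᵥ e₃ = 0) :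
    star ((√μ₁ : ℂ) • prodVec e₁ e₂ + (√μ₂ : ℂ) • prodVec e₃ e₄) ⬝ᵥ
      ((√μ₁ : ℂ) • prodVec e₁ e₂ + (√μ₂ : ℂ) • prodVec e₃ e₄) = 1 := by
  have h31 : star e₃ ⬝ᵥ e₁ = 0 := by rw [star_dotProduct, h13, star_zero]
  simp only [star_add, star_smul, star_prodVec, add_dotProduct, dotProduct_add, smul_dotProduct,
    dotProduct_smul, dotProduct_prodVec, star_dotProduct_self_eq_one he₁,
    star_dotProduct_self_eq_one he₂, star_dotProduct_self_eq_one he₃,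
    star_dotProduct_self_eq_one he₄, h13, h31]
  have hsqrt : ((√μ₁ * √μ₁ + √μ₂ * √μ₂ : ℝ) : ℂ) = 1 := by
    rw [Real.mul_self_sqrt hμ₁, Real.mul_self_sqrt hμ₂, hμ, Complex.ofReal_one]
  push_cast at hsqrt
  simp only [zero_mul, mul_one, smul_eq_mul, Complex.star_def, Complex.conj_ofReal]
  linear_combination hsqrt

theorem star_Phi0_dotProduct (d : ℕ) (w : Fin d × Fin d → ℂ) :
    star (Phi0 d) ⬝ᵥ w = (√d : ℂ)⁻¹ * ∑ i, w (i, i) := by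
  simp only [dotProduct, Fintype.sum_prod_type, Finset.mul_sum, Pi.star_apply, Phi0]
  refine Finset.sum_congr rfl fun i _ => ?_
  simp [apply_ite, ite_mul, Finset.sum_ite_eq]

theorem sigmaPT_eq (d : ℕ) (lam : ℝ) :
    sigmaPT d lam = (lam : ℂ) • 1 - ((lam : ℂ) + 1) • vecMulVec (Phi0 d) (star (Phi0 d)) := by
  ext x y
  simp [sigmaPT, Matrix.one_apply, vecMulVec_apply]

theorem re_star_dotProduct_sigmaPT_mulVec (d : ℕ) (lam : ℝ) (v : Fin d × Fin d → ℂ) :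
    (star v ⬝ᵥ sigmaPT d lam *ᵥ v).re
      = lam * (star v ⬝ᵥ v).re - (lam + 1) * ‖star (Phi0 d) ⬝ᵥ v‖ ^ 2 := by
  have hPhi : star v ⬝ᵥ Phi0 d = star (star (Phi0 d) ⬝ᵥ v) := by
    rw [star_dotProduct]
  rw [sigmaPT_eq, sub_mulVec, smul_mulVec, smul_mulVec, one_mulVec, vecMulVec_mulVec,
    op_smul_eq_smul, dotProduct_sub, dotProduct_smul, dotProduct_smul, dotProduct_smul, hPhi, smul_eq_mul,
    smul_eq_mul, smul_eq_mul, Complex.star_def, Complex.mul_conj']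
  simp [← Complex.ofReal_pow]

theorem norm_sq_star_Phi0_dotProduct_schmidtRankTwo_le (d : ℕ) {μ₁ μ₂ : ℝ} (hμ₁ : 0 ≤ μ₁)
    (hμ₂ : 0 ≤ μ₂) (hμ : μ₁ + μ₂ = 1) {e₁ e₂ e₃ e₄ : Fin d → ℂ}
    (he₁ : ∑ i, ‖e₁ i‖ ^ 2 = 1) (he₂ : ∑ i, ‖e₂ i‖ ^ 2 = 1)
    (he₃ : ∑ i, ‖e₃ i‖ ^ 2 = 1) (he₄ : ∑ i, ‖e₄ i‖ ^ 2 = 1) :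
    ‖star (Phi0 d) ⬝ᵥ ((√μ₁ : ℂ) • prodVec e₁ e₂ + (√μ₂ : ℂ) • prodVec e₃ e₄)‖ ^ 2 ≤ 2 / d := by
  have hdiag : ∑ i, ((√μ₁ : ℂ) • prodVec e₁ e₂ + (√μ₂ : ℂ) • prodVec e₃ e₄) (i, i)
      = (√μ₁ : ℂ) * (e₁ ⬝ᵥ e₂) + (√μ₂ : ℂ) * (e₃ ⬝ᵥ e₄) := by
    simp only [Pi.add_apply, Pi.smul_apply, smul_eq_mul, Finset.sum_add_distrib,
      ← Finset.mul_sum, sum_prodVec_diag]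
  have hnorm : ‖(√μ₁ : ℂ) * (e₁ ⬝ᵥ e₂) + (√μ₂ : ℂ) * (e₃ ⬝ᵥ e₄)‖ ≤ √μ₁ + √μ₂ := by
    refine (norm_add_le _ _).trans (add_le_add ?_ ?_) <;>
    rw [norm_mul, Complex.norm_real, Real.norm_of_nonneg (Real.sqrt_nonneg _)]
    · exact mul_le_of_le_one_right (Real.sqrt_nonneg _) (norm_dotProduct_le_one he₁ he₂)
    · exact mul_le_of_le_one_right (Real.sqrt_nonneg _) (norm_dotProduct_le_one he₃ he₄)
  have hsqrt : (√μ₁ + √μ₂) ^ 2 ≤ 2 := by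
    nlinarith [sq_nonneg (√μ₁ - √μ₂), Real.sq_sqrt hμ₁, Real.sq_sqrt hμ₂]
  calc ‖star (Phi0 d) ⬝ᵥ ((√μ₁ : ℂ) • prodVec e₁ e₂ + (√μ₂ : ℂ) • prodVec e₃ e₄)‖ ^ 2
      = ‖(√μ₁ : ℂ) * (e₁ ⬝ᵥ e₂) + (√μ₂ : ℂ) * (e₃ ⬝ᵥ e₄)‖ ^ 2 / d := by
        rw [star_Phi0_dotProduct, hdiag, norm_mul, mul_pow, norm_inv, Complex.norm_real,
          Real.norm_of_nonneg (Real.sqrt_nonneg _), inv_pow, Real.sq_sqrt d.cast_nonneg,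
          inv_mul_eq_div]
    _ ≤ (√μ₁ + √μ₂) ^ 2 / d := by gcongr
    _ ≤ 2 / d := by gcongr

theorem stmt_7_general (d : ℕ) (hd : 3 ≤ d) (lam : ℝ)
    (hlam : 2 / ((d : ℝ) - 2) ≤ lam)
    (μ₁ μ₂ : ℝ) (hμ₁ : 0 ≤ μ₁) (hμ₂ : 0 ≤ μ₂) (hμ : μ₁ + μ₂ = 1)
    (e₁ e₂ e₃ e₄ : Fin d → ℂ)
    (he₁ : ∑ i, ‖e₁ i‖ ^ 2 = 1)
    (he₂ : ∑ i, ‖e₂ i‖ ^ 2 = 1)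
    (he₃ : ∑ i, ‖e₃ i‖ ^ 2 = 1)
    (he₄ : ∑ i, ‖e₄ i‖ ^ 2 = 1)
    (h13 : ∑ i, star (e₁ i) * e₃ i = 0)
    (v : Fin d × Fin d → ℂ)
    (hv : v = fun p => (Real.sqrt μ₁ : ℂ) * (e₁ p.1 * e₂ p.2)
        + (Real.sqrt μ₂ : ℂ) * (e₃ p.1 * e₄ p.2)) :
    0 ≤ (star v ⬝ᵥ (sigmaPT d lam) *ᵥ v).re := by
  replace hv : v = (√μ₁ : ℂ) • prodVec e₁ e₂ + (√μ₂ : ℂ) • prodVec e₃ e₄ := hv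
  have hd2 : (0 : ℝ) < d - 2 := by
    have : (3 : ℝ) ≤ d := by exact_mod_cast hd
    linarith
  have hlam_pos : 0 < lam := (div_pos two_pos hd2).trans_le hlam
  have hlam' : 2 ≤ lam * (d - 2) := (div_le_iff₀ hd2).1 hlam
  rw [re_star_dotProduct_sigmaPT_mulVec, hv,
    star_dotProduct_self_schmidtRankTwo hμ₁ hμ₂ hμ he₁ he₂ he₃ he₄ h13, Complex.one_re, mul_one]
  calc 0 ≤ lam - (lam + 1) * (2 / d) := by
        rw [mul_div_assoc', sub_nonneg, div_le_iff₀ (by linarith)]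
        linarith
    _ ≤ _ := by
        gcongr
        exact norm_sq_star_Phi0_dotProduct_schmidtRankTwo_le d hμ₁ hμ₂ hμ he₁ he₂ he₃ he₄

/-- For `d ≥ 3` and `λ ≥ 2/(d−2)`, every (unit, Schmidt rank at
most two) vector `|v⟩ = √μ₁ |e₁⟩⊗|e₂⟩ + √μ₂ |e₃⟩⊗|e₄⟩` satisfies
`⟨v|σ^{PT}(λ)|v⟩ ≥ 0`. -/
theorem stmt_7 (d : ℕ) (hd : 3 ≤ d) (lam : ℝ) (hlam0 : 0 ≤ lam)
    (hlam : 2 / ((d : ℝ) - 2) ≤ lam)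
    (μ₁ μ₂ : ℝ) (hμ₁ : 0 ≤ μ₁) (hμ₂ : 0 ≤ μ₂) (hμ : μ₁ + μ₂ = 1)
    (e₁ e₂ e₃ e₄ : Fin d → ℂ)
    (he₁ : ∑ i, ‖e₁ i‖ ^ 2 = 1)
    (he₂ : ∑ i, ‖e₂ i‖ ^ 2 = 1)
    (he₃ : ∑ i, ‖e₃ i‖ ^ 2 = 1)
    (he₄ : ∑ i, ‖e₄ i‖ ^ 2 = 1)
    (h13 : ∑ i, star (e₁ i) * e₃ i = 0)
    (h24 : ∑ i, star (e₂ i) * e₄ i = 0)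
    (v : Fin d × Fin d → ℂ)
    (hv : v = fun p => (Real.sqrt μ₁ : ℂ) * (e₁ p.1 * e₂ p.2)
        + (Real.sqrt μ₂ : ℂ) * (e₃ p.1 * e₄ p.2)) :
    0 ≤ (star v ⬝ᵥ (sigmaPT d lam) *ᵥ v).re :=
  stmt_7_general d hd lam hlam μ₁ μ₂ hμ₁ hμ₂ hμ e₁ e₂ e₃ e₄ he₁ he₂ he₃ he₄ h13 v hv
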